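/- arXiv:1812.05499 — 9 statements merged into one kernel-verified Lean document; each statement's English description precedes it below -/
import Mathlib

section
/- Let U : ℝ → ℝ be a real-valued continuous function on [-1,1] and let k₀ ∈ ℝ, k₀ ≠ 0. Suppose z : [-1,1] → ℂ is a C² solution of -z'' + U z = k₀² z on [-1,1] with z'(1) = i k₀ z(1) and z'(-1) = -i k₀ z(-1). Then z(1) = 0 and z(-1) = 0 (and consequently z'(±1) = 0). -/
/-- Real potentials have no spectral singularities: an outgoing solution must vanish
at the endpoints. -/
theorem stmt_2 (U : ℝ → ℝ) (k₀ : ℝ) (hk : k₀ ≠ 0)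
    (hU : ContinuousOn U (Set.Icc (-1 : ℝ) 1))
    (z : ℝ → ℂ) (hz : ContDiff ℝ 2 z)
    (hode : ∀ x ∈ Set.Icc (-1 : ℝ) 1,
      -(deriv (deriv z) x) + (U x : ℂ) * z x = (k₀ : ℂ) ^ 2 * z x)
    (hb1 : deriv z 1 = Complex.I * k₀ * z 1)
    (hb2 : deriv z (-1) = -(Complex.I * k₀) * z (-1)) :
    z 1 = 0 ∧ z (-1) = 0 ∧ deriv z 1 = 0 ∧ deriv z (-1) = 0 := by
  have hz1 : Differentiable ℝ z := hz.differentiable (by norm_num)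
  have hz2 : Differentiable ℝ (deriv z) :=
    (hz.iterate_deriv' 1 1).differentiable (by norm_num)
  set f : ℝ → ℝ := fun x => (deriv z x * (starRingEnd ℂ) (z x)).im with hf
  have hderiv : ∀ x : ℝ, HasDerivAt f
      ((deriv (deriv z) x * (starRingEnd ℂ) (z x)
        + deriv z x * (starRingEnd ℂ) (deriv z x)).im) x := by
    intro x
    have h1 : HasDerivAt (deriv z) (deriv (deriv z) x) x := (hz2 x).hasDerivAt
    have h2 : HasDerivAt (fun y => (starRingEnd ℂ) (z y))
        ((starRingEnd ℂ) (deriv z x)) x := (hz1 x).hasDerivAt.star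
    exact (Complex.imCLM.hasFDerivAt.comp_hasDerivAt x (h1.mul h2))
  have hd0 : ∀ x ∈ Set.Icc (-1 : ℝ) 1, HasDerivAt f 0 x := by
    intro x hx
    have hzz : deriv (deriv z) x = ((U x : ℂ) - (k₀ : ℂ) ^ 2) * z x := by
      have := hode x hx; ring_nf at this ⊢; linear_combination -this
    have := hderiv x
    rw [hzz] at this
    convert this using 1
    rw [mul_assoc, Complex.mul_conj, Complex.mul_conj]
    simp [← Complex.ofReal_pow]
  have hconst : f 1 = f (-1) := by
    have := constant_of_has_deriv_right_zero (f := f) (a := (-1:ℝ)) (b := 1)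
      (fun x hx => ((hd0 x hx).continuousAt).continuousWithinAt)
      (fun x hx => ((hd0 x (Set.mem_Icc_of_Ico hx)).hasDerivWithinAt))
    exact this 1 (by norm_num)
  have e1 : f 1 = k₀ * Complex.normSq (z 1) := by
    simp only [hf, hb1]
    rw [mul_assoc, Complex.mul_conj]
    simp [mul_comm]
  have e2 : f (-1) = -(k₀ * Complex.normSq (z (-1))) := by
    simp only [hf, hb2]
    rw [neg_mul, neg_mul, mul_assoc, Complex.mul_conj]
    simp [mul_comm]
  rw [e1, e2] at hconst
  have hsum : Complex.normSq (z 1) + Complex.normSq (z (-1)) = 0 := by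
    have : k₀ * (Complex.normSq (z 1) + Complex.normSq (z (-1))) = 0 := by ring_nf; linarith [hconst]
    exact (mul_eq_zero.1 this).resolve_left hk
  have h1 : z 1 = 0 := by
    have := Complex.normSq_nonneg (z 1)
    have := Complex.normSq_nonneg (z (-1))
    have : Complex.normSq (z 1) = 0 := by linarith
    exact Complex.normSq_eq_zero.1 this
  have h2 : z (-1) = 0 := by
    have := Complex.normSq_nonneg (z 1)
    have := Complex.normSq_nonneg (z (-1))
    have : Complex.normSq (z (-1)) = 0 := by linarith
    exact Complex.normSq_eq_zero.1 this
  exact ⟨h1, h2, by rw [hb1, h1, mul_zero], by rw [hb2, h2, mul_zero]⟩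
end

section
/- Let k₀ ∈ ℝ, k₀ ≠ 0, and let κ ∈ ℂ satisfy i κ tan κ = k₀ (with cos κ ≠ 0). Set C = e^{2iκ}(κ - k₀)/(κ + k₀) and z(x) = e^{iκx} + C e^{-iκx}. Then z satisfies -z'' + U z = k₀² z on (-1,1) with the constant potential U = k₀² - κ², and z obeys the outgoing boundary conditions z'(1) = i k₀ z(1) and z'(-1) = -i k₀ z(-1). In particular the rectangular potential equal to k₀² - κ² on [-1,1] and 0 outside has a spectral singularity at k₀. -/
/-!
The condition `i κ tan κ = k₀` means `i κ sin κ = k₀ cos κ`, which is equivalent to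
`e^{2iκ} (κ - k₀) = κ + k₀`, i.e. `C = 1`. Hence `z x = 2 cos (κ x)`, which solves `z'' = -κ² z`,
and both boundary conditions reduce to `i κ sin κ = k₀ cos κ` again.
-/

open Complex

lemma hasDerivAt_cos_const_mul_ofReal (κ : ℂ) (x : ℝ) :
    HasDerivAt (fun t : ℝ => cos (κ * t)) (-sin (κ * x) * κ) x := by
  simpa using (((hasDerivAt_id (x : ℂ)).const_mul κ).ccos).comp_ofReal

lemma hasDerivAt_sin_const_mul_ofReal (κ : ℂ) (x : ℝ) :
    HasDerivAt (fun t : ℝ => sin (κ * t)) (cos (κ * x) * κ) x := by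
  simpa using (((hasDerivAt_id (x : ℂ)).const_mul κ).csin).comp_ofReal

lemma I_mul_mul_sin_eq_of_I_mul_mul_tan_eq {κ k : ℂ} (hcos : cos κ ≠ 0)
    (htan : I * κ * tan κ = k) : I * κ * sin κ = k * cos κ := by
  rw [← htan, tan_eq_sin_div_cos]
  field_simp

lemma exp_two_mul_I_mul_sub_eq_add {κ k : ℂ} (hcos : cos κ ≠ 0)
    (hsc : I * κ * sin κ = k * cos κ) : exp (2 * I * κ) * (κ - k) = κ + k := by
  have hE : exp (2 * I * κ) = (cos κ + sin κ * I) ^ 2 := by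
    rw [← exp_mul_I, ← exp_nat_mul]; ring_nf
  apply mul_right_cancel₀ hcos
  rw [hE]
  linear_combination ((cos κ + sin κ * I) ^ 2 + 1) * hsc
    + κ * (cos κ + sin κ * I) * sin_sq_add_cos_sq κ - κ * (cos κ + sin κ * I) * sin κ ^ 2 * I_sq

theorem stmt_3_general (k₀ : ℝ) (κ : ℂ)
    (hcos : Complex.cos κ ≠ 0)
    (htan : Complex.I * κ * Complex.tan κ = (k₀ : ℂ))
    (hκk : κ + (k₀ : ℂ) ≠ 0)
    (C : ℂ) (hC : C = Complex.exp (2 * Complex.I * κ) * (κ - k₀) / (κ + k₀))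
    (z : ℝ → ℂ)
    (hzdef : ∀ x : ℝ, z x = Complex.exp (Complex.I * κ * x) + C * Complex.exp (-(Complex.I * κ * x))) :
    (∀ x ∈ Set.Ioo (-1 : ℝ) 1,
      -(deriv (deriv z) x) + ((k₀ : ℂ) ^ 2 - κ ^ 2) * z x = (k₀ : ℂ) ^ 2 * z x) ∧
    deriv z 1 = Complex.I * k₀ * z 1 ∧
    deriv z (-1) = -(Complex.I * k₀) * z (-1) := by
  have hsc := I_mul_mul_sin_eq_of_I_mul_mul_tan_eq hcos htan
  have hC1 : C = 1 := by rw [hC, exp_two_mul_I_mul_sub_eq_add hcos hsc, div_self hκk]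
  have hz : z = fun x : ℝ => 2 * cos (κ * x) := by
    funext x
    rw [hzdef, hC1, one_mul, two_cos]
    ring_nf
  have hdz : deriv z = fun x : ℝ => 2 * (-sin (κ * x) * κ) := by
    funext x
    rw [hz]
    exact ((hasDerivAt_cos_const_mul_ofReal κ x).const_mul 2).deriv
  have hd2z (x : ℝ) : deriv (deriv z) x = -2 * (cos (κ * x) * κ) * κ := by
    rw [hdz]
    exact (((hasDerivAt_sin_const_mul_ofReal κ x).neg.mul_const κ).const_mul 2).deriv.trans
      (by ring)
  refine ⟨fun x _ => ?_, ?_, ?_⟩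
  · rw [hd2z, hz]
    ring
  · rw [hdz, hz]
    simp only [ofReal_one, mul_one]
    linear_combination 2 * I * hsc - 2 * κ * sin κ * I_sq
  · rw [hdz, hz]
    simp only [ofReal_neg, ofReal_one, mul_neg, mul_one, sin_neg, cos_neg]
    linear_combination -2 * I * hsc + 2 * κ * sin κ * I_sq

/-- Rectangular potentials with a prescribed spectral singularity at k₀. -/
theorem stmt_3 (k₀ : ℝ) (hk : k₀ ≠ 0) (κ : ℂ)
    (hcos : Complex.cos κ ≠ 0)
    (htan : Complex.I * κ * Complex.tan κ = (k₀ : ℂ))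
    (hκk : κ + (k₀ : ℂ) ≠ 0)
    (C : ℂ) (hC : C = Complex.exp (2 * Complex.I * κ) * (κ - k₀) / (κ + k₀))
    (z : ℝ → ℂ)
    (hzdef : ∀ x : ℝ, z x = Complex.exp (Complex.I * κ * x) + C * Complex.exp (-(Complex.I * κ * x))) :
    (∀ x ∈ Set.Ioo (-1 : ℝ) 1,
      -(deriv (deriv z) x) + ((k₀ : ℂ) ^ 2 - κ ^ 2) * z x = (k₀ : ℂ) ^ 2 * z x) ∧
    deriv z 1 = Complex.I * k₀ * z 1 ∧
    deriv z (-1) = -(Complex.I * k₀) * z (-1) :=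
  stmt_3_general k₀ κ hcos htan hκk C hC z hzdef
end

section
/- Let n be a nonzero integer and k₀ = π n. The function z(x) = cos(π n x) + i sin(π x / 2) sin(π n x) satisfies z(±1) ≠ 0 and the outgoing boundary conditions z'(1) = i k₀ z(1) and z'(-1) = -i k₀ z(-1). -/
/-! At x = ±1 the phase π n x is a multiple of π, so sin(π n x) vanishes there: z(±1) = cos(π n) = (-1)ⁿ,
and in z' only the term where the envelope sin(π x / 2) multiplies the derivative of sin(π n x) survives,
giving z'(±1) = i k₀ sin(±π/2) z(±1) = ±i k₀ z(±1). -/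

open Complex

noncomputable def modulatedWave (k : ℝ) (g : ℝ → ℝ) (t : ℝ) : ℂ :=
  (Real.cos (k * t) : ℂ) + I * ((g t * Real.sin (k * t) : ℝ) : ℂ)

section Node

variable {k x : ℝ} {g : ℝ → ℝ}

theorem modulatedWave_of_sin_eq_zero (hx : Real.sin (k * x) = 0) :
    modulatedWave k g x = Real.cos (k * x) := by
  simp [modulatedWave, hx]

theorem hasDerivAt_modulatedWave_of_sin_eq_zero (hg : DifferentiableAt ℝ g x)
    (hx : Real.sin (k * x) = 0) :
    HasDerivAt (modulatedWave k g) (I * k * g x * modulatedWave k g x) x := by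
  have hkx : HasDerivAt (fun t : ℝ => k * t) k x := by
    simpa using (hasDerivAt_id x).const_mul k
  have hwave := hkx.cos.ofReal_comp.add
    ((hg.hasDerivAt.mul hkx.sin).ofReal_comp.const_mul I)
  refine hwave.congr_deriv ?_
  rw [modulatedWave_of_sin_eq_zero hx, hx]
  push_cast
  ring

end Node

theorem stmt_5_general (n : ℤ) (k₀ : ℝ) (hk : k₀ = Real.pi * n)
    (z : ℝ → ℂ)
    (hzdef : ∀ x : ℝ, z x = (Real.cos (Real.pi * n * x) : ℝ) +
      Complex.I * (Real.sin (Real.pi * x / 2) * Real.sin (Real.pi * n * x) : ℝ)) :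
    z 1 ≠ 0 ∧ z (-1) ≠ 0 ∧
    deriv z 1 = Complex.I * k₀ * z 1 ∧
    deriv z (-1) = -(Complex.I * k₀) * z (-1) := by
  have hz : z = modulatedWave k₀ (fun t => Real.sin (Real.pi * t / 2)) := by
    funext x; rw [hzdef, hk]; rfl
  have hsin : ∀ s : ℝ, s = 1 ∨ s = -1 → Real.sin (k₀ * s) = 0 := by
    rintro s (rfl | rfl) <;> simp [hk, mul_comm Real.pi, Real.sin_int_mul_pi]
  have hne : ∀ s : ℝ, s = 1 ∨ s = -1 → z s ≠ 0 := by
    intro s hs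
    rw [hz, modulatedWave_of_sin_eq_zero (hsin s hs)]
    rcases hs with rfl | rfl <;>
      simpa [hk, mul_comm Real.pi, Real.cos_int_mul_pi] using zpow_ne_zero n (by norm_num)
  have hderiv : ∀ s : ℝ, s = 1 ∨ s = -1 →
      deriv z s = I * k₀ * Real.sin (Real.pi * s / 2) * z s := by
    intro s hs
    rw [hz]
    exact (hasDerivAt_modulatedWave_of_sin_eq_zero (by fun_prop) (hsin s hs)).deriv
  refine ⟨hne 1 (.inl rfl), hne (-1) (.inr rfl), ?_, ?_⟩
  · rw [hderiv 1 (.inl rfl)]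
    simp
  · rw [hderiv (-1) (.inr rfl)]
    simp [neg_div]

/-- The ansatz z = cos(πnx) + i sin(πx/2) sin(πnx) satisfies the outgoing boundary
conditions for k₀ = πn and is nonvanishing at the endpoints. -/
theorem stmt_5 (n : ℤ) (hn : n ≠ 0) (k₀ : ℝ) (hk : k₀ = Real.pi * n)
    (z : ℝ → ℂ)
    (hzdef : ∀ x : ℝ, z x = (Real.cos (Real.pi * n * x) : ℝ) +
      Complex.I * (Real.sin (Real.pi * x / 2) * Real.sin (Real.pi * n * x) : ℝ)) :
    z 1 ≠ 0 ∧ z (-1) ≠ 0 ∧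
    deriv z 1 = Complex.I * k₀ * z 1 ∧
    deriv z (-1) = -(Complex.I * k₀) * z (-1) :=
  stmt_5_general n k₀ hk z hzdef
end

section
/- Let n be an integer and k₀ = π(1/2 + n). The function z(x) = sin(π x / 2) cos(k₀ x) + i sin(k₀ x) satisfies z(±1) ≠ 0 and the outgoing boundary conditions z'(1) = i k₀ z(1) and z'(-1) = -i k₀ z(-1). -/
/-- The ansatz z = sin(πx/2) cos(k₀x) + i sin(k₀x), k₀ = π(1/2+n), satisfies the
outgoing boundary conditions and is nonvanishing at the endpoints. -/
theorem stmt_6 (n : ℤ) (k₀ : ℝ) (hk : k₀ = Real.pi * (1 / 2 + n))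
    (z : ℝ → ℂ)
    (hzdef : ∀ x : ℝ, z x = (Real.sin (Real.pi * x / 2) * Real.cos (k₀ * x) : ℝ) +
      Complex.I * (Real.sin (k₀ * x) : ℝ)) :
    z 1 ≠ 0 ∧ z (-1) ≠ 0 ∧
    deriv z 1 = Complex.I * k₀ * z 1 ∧
    deriv z (-1) = -(Complex.I * k₀) * z (-1) := by
  have hzfun : z = fun x : ℝ => ((Real.sin (Real.pi * x / 2) * Real.cos (k₀ * x) : ℝ) : ℂ) +
      Complex.I * (Real.sin (k₀ * x) : ℝ) := funext hzdef
  set c : ℝ := Real.cos (n * Real.pi) with hc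
  have hsin0 : Real.sin (n * Real.pi) = 0 := by
    simpa using Real.sin_int_mul_pi n
  have hc2 : c ^ 2 = 1 := by
    have := Real.sin_sq_add_cos_sq (n * Real.pi)
    rw [hsin0] at this; nlinarith
  have hcne : c ≠ 0 := by
    intro h; rw [h] at hc2; norm_num at hc2
  have hk1 : k₀ = Real.pi / 2 + n * Real.pi := by rw [hk]; ring
  have hcosk : Real.cos k₀ = 0 := by
    rw [hk1, Real.cos_add]; simp [hsin0]
  have hsink : Real.sin k₀ = c := by
    rw [hk1, Real.sin_add]; simp [hc]
  -- derivative of z at any point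
  have hz : ∀ x : ℝ, HasDerivAt z
      (((Real.cos (Real.pi * x / 2) * (Real.pi / 2) * Real.cos (k₀ * x)
        + Real.sin (Real.pi * x / 2) * (-Real.sin (k₀ * x) * k₀) : ℝ) : ℂ)
        + Complex.I * ((Real.cos (k₀ * x) * k₀ : ℝ) : ℂ)) x := by
    intro x
    have hin1 : HasDerivAt (fun x : ℝ => Real.pi * x / 2) (Real.pi / 2) x := by
      simpa using ((hasDerivAt_id x).const_mul Real.pi).div_const 2
    have hin2 : HasDerivAt (fun x : ℝ => k₀ * x) k₀ x := by
      simpa using (hasDerivAt_id x).const_mul k₀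
    have h1 : HasDerivAt (fun x : ℝ => Real.sin (Real.pi * x / 2))
        (Real.cos (Real.pi * x / 2) * (Real.pi / 2)) x :=
      (Real.hasDerivAt_sin _).comp x hin1
    have h2 : HasDerivAt (fun x : ℝ => Real.cos (k₀ * x))
        (-Real.sin (k₀ * x) * k₀) x := (Real.hasDerivAt_cos _).comp x hin2
    have h3 : HasDerivAt (fun x : ℝ => Real.sin (k₀ * x))
        (Real.cos (k₀ * x) * k₀) x := (Real.hasDerivAt_sin _).comp x hin2
    have hmul := (h1.mul h2).ofReal_comp
    have h3' := (h3.ofReal_comp).const_mul Complex.I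
    rw [hzfun]
    exact hmul.add h3'
  have hv1 : z 1 = Complex.I * c := by
    rw [hzdef 1]
    norm_num [Real.sin_pi_div_two, hcosk, hsink]
  have hvm1 : z (-1) = -(Complex.I * c) := by
    rw [hzdef (-1)]
    have : Real.pi * (-1) / 2 = -(Real.pi / 2) := by ring
    norm_num [this, Real.sin_pi_div_two, hcosk, hsink]
  have hd1 : deriv z 1 = (-(k₀ * c) : ℝ) := by
    rw [(hz 1).deriv]
    norm_num [Real.sin_pi_div_two, Real.cos_pi_div_two, hcosk, hsink]
    ring
  have hdm1 : deriv z (-1) = (-(k₀ * c) : ℝ) := by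
    rw [(hz (-1)).deriv]
    have h1 : Real.pi * (-1) / 2 = -(Real.pi / 2) := by ring
    have h2 : k₀ * (-1) = -k₀ := by ring
    rw [h1, h2, Real.sin_neg, Real.cos_neg, Real.sin_neg, Real.cos_neg,
      Real.sin_pi_div_two, Real.cos_pi_div_two, hcosk, hsink]
    push_cast
    ring
  refine ⟨?_, ?_, ?_, ?_⟩
  · rw [hv1]
    simp [Complex.ext_iff, hcne]
  · rw [hvm1]
    simp [Complex.ext_iff, hcne]
  · rw [hd1, hv1]
    push_cast
    ring_nf
    rw [Complex.I_sq]
    ring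
  · rw [hdm1, hvm1]
    push_cast
    ring_nf
    rw [Complex.I_sq]
    ring
end

section
/- For z(x) = cos(πx) + i sin(πx/2) sin(πx), the potential U(x) = (z''(x) + π² z(x))/z(x) equals (π²/4) · (3 cos(πx/2) + 5 cos(3πx/2)) / (cos(πx/2) - cos(3πx/2) - 2i cos(πx)) at every x where z(x) ≠ 0. -/
/-!
Product-to-sum turns `z` into a cosine polynomial,
`z x = cos (π x) + (i/2) (cos (π x / 2) - cos (3 π x / 2))`,
on which `d²/dx² + π²` kills the frequency `π` and scales the frequencies `π/2`, `3π/2` by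
`3π²/4`, `-5π²/4`. The denominator of the claimed formula is exactly `-2 i z x`.
-/

section CosinePolynomial

variable {ι : Type*} (s : Finset ι) (A : ι → ℂ) (a : ι → ℝ)

theorem hasDerivAt_sum_ofReal_cos_mul (x : ℝ) :
    HasDerivAt (fun t : ℝ => ∑ k ∈ s, A k * Real.cos (a k * t))
      (∑ k ∈ s, -(A k * a k) * Real.sin (a k * x)) x := by
  refine HasDerivAt.fun_sum fun k _ => ?_
  refine ((((hasDerivAt_id' x).const_mul (a k)).cos.ofReal_comp).const_mul (A k)).congr_deriv ?_
  push_cast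
  ring

theorem hasDerivAt_sum_ofReal_sin_mul (x : ℝ) :
    HasDerivAt (fun t : ℝ => ∑ k ∈ s, A k * Real.sin (a k * t))
      (∑ k ∈ s, A k * a k * Real.cos (a k * x)) x := by
  refine HasDerivAt.fun_sum fun k _ => ?_
  refine ((((hasDerivAt_id' x).const_mul (a k)).sin.ofReal_comp).const_mul (A k)).congr_deriv ?_
  push_cast
  ring

theorem deriv_deriv_sum_ofReal_cos_mul (x : ℝ) :
    deriv (deriv fun t : ℝ => ∑ k ∈ s, A k * Real.cos (a k * t)) x =
      ∑ k ∈ s, -(A k * a k ^ 2) * Real.cos (a k * x) := by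
  have hderiv : deriv (fun t : ℝ => ∑ k ∈ s, A k * Real.cos (a k * t)) =
      fun t => ∑ k ∈ s, -(A k * a k) * Real.sin (a k * t) :=
    funext fun t => (hasDerivAt_sum_ofReal_cos_mul s A a t).deriv
  rw [hderiv, (hasDerivAt_sum_ofReal_sin_mul s (fun k => -(A k * a k)) a x).deriv]
  refine Finset.sum_congr rfl fun k _ => ?_
  ring

end CosinePolynomial

theorem Real.sin_half_mul_sin (t : ℝ) :
    Real.sin (t / 2) * Real.sin t = (Real.cos (t / 2) - Real.cos (3 * t / 2)) / 2 := by
  rw [Real.cos_sub_cos, show (t / 2 - 3 * t / 2) / 2 = -(t / 2) by ring,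
    show (t / 2 + 3 * t / 2) / 2 = t by ring, Real.sin_neg]
  ring

noncomputable def zPi (t : ℝ) : ℂ :=
  (Real.cos (Real.pi * t) : ℝ) +
    Complex.I * (Real.sin (Real.pi * t / 2) * Real.sin (Real.pi * t) : ℝ)

theorem zPi_eq (t : ℝ) : zPi t = Real.cos (Real.pi * t) +
    Complex.I / 2 * (Real.cos (Real.pi * t / 2) - Real.cos (3 * Real.pi * t / 2)) := by
  rw [zPi, Real.sin_half_mul_sin, mul_assoc 3]
  push_cast
  ring

theorem zPi_eq_sum : zPi = fun t : ℝ => ∑ k : Fin 3, ![1, Complex.I / 2, -Complex.I / 2] k *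
    Real.cos (![Real.pi, Real.pi / 2, 3 * Real.pi / 2] k * t) := by
  funext t
  simp only [zPi_eq, Fin.sum_univ_three, Matrix.cons_val_zero, Matrix.cons_val_one,
    Matrix.cons_val]
  ring_nf

theorem deriv_deriv_zPi_add (x : ℝ) :
    deriv (deriv zPi) x + Real.pi ^ 2 * zPi x = Complex.I * Real.pi ^ 2 / 8 *
      (3 * Real.cos (Real.pi * x / 2) + 5 * Real.cos (3 * Real.pi * x / 2)) := by
  rw [zPi_eq_sum, deriv_deriv_sum_ofReal_cos_mul]
  simp only [Fin.sum_univ_three, Matrix.cons_val_zero, Matrix.cons_val_one, Matrix.cons_val]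
  push_cast
  ring_nf

theorem ofReal_cos_sub_cos_sub_two_I_mul (x : ℝ) :
    ((Real.cos (Real.pi * x / 2) - Real.cos (3 * Real.pi * x / 2) : ℝ) : ℂ) -
      2 * Complex.I * (Real.cos (Real.pi * x) : ℝ) = -2 * Complex.I * zPi x := by
  rw [zPi_eq, Complex.ofReal_sub]
  linear_combination
    (Real.cos (Real.pi * x / 2) - Real.cos (3 * Real.pi * x / 2) : ℂ) * Complex.I_sq

/-- Explicit formula (19) for the even potential with a spectral singularity at k₀ = π. -/
theorem stmt_7 (z : ℝ → ℂ)
    (hzdef : ∀ x : ℝ, z x = (Real.cos (Real.pi * x) : ℝ) +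
      Complex.I * (Real.sin (Real.pi * x / 2) * Real.sin (Real.pi * x) : ℝ)) :
    ∀ x : ℝ, z x ≠ 0 →
      (deriv (deriv z) x + (Real.pi : ℂ) ^ 2 * z x) / z x =
      ((Real.pi : ℂ) ^ 2 / 4) *
        ((3 * Real.cos (Real.pi * x / 2) + 5 * Real.cos (3 * Real.pi * x / 2) : ℝ)) /
        ((Real.cos (Real.pi * x / 2) - Real.cos (3 * Real.pi * x / 2) : ℝ) -
          2 * Complex.I * (Real.cos (Real.pi * x) : ℝ)) := by
  obtain rfl : z = zPi := funext hzdef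
  intro x hzx
  have hdenom_ne : -2 * Complex.I * zPi x ≠ 0 := by simp [hzx]
  rw [deriv_deriv_zPi_add, ofReal_cos_sub_cos_sub_two_I_mul, div_eq_div_iff hzx hdenom_ne]
  simp only [Complex.ofReal_add, Complex.ofReal_mul, Complex.ofReal_ofNat]
  linear_combination -(Real.pi ^ 2 / 4 * (3 * Real.cos (Real.pi * x / 2) +
    5 * Real.cos (3 * Real.pi * x / 2)) * zPi x : ℂ) * Complex.I_sq
end

section
/- Let k₀ ∈ ℝ, k₀ ≠ 0, let U be continuous on [-1,1], and let ψ be a C² solution of -ψ'' + U ψ = k₀² ψ on [-1,1] with ψ(±1) = α_± e^{ik₀} and ψ'(±1) = ±ik₀ α_± e^{ik₀}. Suppose φ is a C² solution on [-1,1] of -φ'' + U φ - k₀² φ = 2 k₀ ψ that matches the function (i α₋ |x| + β₋) e^{ik₀|x|} at x = -1 in value and derivative, i.e. φ(-1) = (i α₋ + β₋) e^{ik₀} and φ'(-1) = -ik₀(i α₋ + β₋) e^{ik₀} - i α₋ e^{ik₀}. Then for all x ∈ [-1,1]: φ'(x) ψ(x) - ψ'(x) φ(x) + 2 k₀ ∫_{-1}^{x}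 ψ(ξ)² dξ = -i α₋² e^{2 i k₀}. -/
open intervalIntegral

/-- First integral (29): φ'ψ - ψ'φ + 2k₀∫ψ² is constant, equal to -iαm²e^{2ik₀}. -/
theorem stmt_11 (k₀ : ℝ) (hk : k₀ ≠ 0) (U : ℝ → ℂ)
    (hU : ContinuousOn U (Set.Icc (-1 : ℝ) 1))
    (αm αp βm : ℂ) (ψ φ : ℝ → ℂ)
    (hψ : ContDiff ℝ 2 ψ) (hφ : ContDiff ℝ 2 φ)
    (hψode : ∀ x ∈ Set.Icc (-1 : ℝ) 1,
      -(deriv (deriv ψ) x) + U x * ψ x = (k₀ : ℂ) ^ 2 * ψ x)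
    (hψm : ψ (-1) = αm * Complex.exp (Complex.I * k₀))
    (hψm' : deriv ψ (-1) = -(Complex.I * k₀) * αm * Complex.exp (Complex.I * k₀))
    (hψp : ψ 1 = αp * Complex.exp (Complex.I * k₀))
    (hψp' : deriv ψ 1 = Complex.I * k₀ * αp * Complex.exp (Complex.I * k₀))
    (hφode : ∀ x ∈ Set.Icc (-1 : ℝ) 1,
      -(deriv (deriv φ) x) + U x * φ x - (k₀ : ℂ) ^ 2 * φ x = 2 * k₀ * ψ x)
    (hφm : φ (-1) = (Complex.I * αm + βm) * Complex.exp (Complex.I * k₀))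
    (hφm' : deriv φ (-1) =
      -(Complex.I * k₀) * (Complex.I * αm + βm) * Complex.exp (Complex.I * k₀)
        - Complex.I * αm * Complex.exp (Complex.I * k₀)) :
    ∀ x ∈ Set.Icc (-1 : ℝ) 1,
      deriv φ x * ψ x - deriv ψ x * φ x + 2 * k₀ * (∫ ξ in (-1 : ℝ)..x, (ψ ξ) ^ 2) =
        -(Complex.I * αm ^ 2 * Complex.exp (2 * Complex.I * k₀)) := by

  have hψc : Continuous ψ := hψ.continuous
  have hψd : Differentiable ℝ ψ := hψ.differentiable (by norm_num)
  have hφd : Differentiable ℝ φ := hφ.differentiable (by norm_num)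
  have hψd' : Differentiable ℝ (deriv ψ) :=
    (hψ.iterate_deriv' 1 1).differentiable (by norm_num)
  have hφd' : Differentiable ℝ (deriv φ) :=
    (hφ.iterate_deriv' 1 1).differentiable (by norm_num)
  set f : ℝ → ℂ := fun x =>
    deriv φ x * ψ x - deriv ψ x * φ x + 2 * k₀ * (∫ ξ in (-1 : ℝ)..x, (ψ ξ) ^ 2) with hf
  have hint : ∀ x : ℝ, IntervalIntegrable (fun ξ => (ψ ξ) ^ 2) MeasureTheory.volume (-1) x :=
    fun x => ((hψc.pow 2).intervalIntegrable _ _)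
  have hfc : ContinuousOn f (Set.Icc (-1 : ℝ) 1) := by
    apply Continuous.continuousOn
    apply Continuous.add
    · exact (hφd'.continuous.mul hψc).sub (hψd'.continuous.mul hφd.continuous)
    · exact continuous_const.mul
        (intervalIntegral.continuous_primitive (fun a b => (hψc.pow 2).intervalIntegrable a b) (-1))
  have hderiv : ∀ x ∈ Set.Ico (-1 : ℝ) 1, HasDerivWithinAt f 0 (Set.Ici x) x := by
    intro x hx
    have hxI : x ∈ Set.Icc (-1 : ℝ) 1 := ⟨hx.1, le_of_lt hx.2⟩
    have hI : HasDerivAt (fun u => ∫ ξ in (-1 : ℝ)..u, (ψ ξ) ^ 2) ((ψ x) ^ 2) x :=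
      intervalIntegral.integral_hasDerivAt_right (hint x)
        ((hψc.pow 2).stronglyMeasurableAtFilter _ _) ((hψc.pow 2).continuousAt)
    have h1 : HasDerivAt (fun u => deriv φ u * ψ u - deriv ψ u * φ u)
        (deriv (deriv φ) x * ψ x + deriv φ x * deriv ψ x
          - (deriv (deriv ψ) x * φ x + deriv ψ x * deriv φ x)) x :=
      (((hφd' x).hasDerivAt.mul (hψd x).hasDerivAt)).sub
        (((hψd' x).hasDerivAt.mul (hφd x).hasDerivAt))
    have h2 : HasDerivAt f
        (deriv (deriv φ) x * ψ x + deriv φ x * deriv ψ x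
          - (deriv (deriv ψ) x * φ x + deriv ψ x * deriv φ x)
          + 2 * k₀ * (ψ x) ^ 2) x := h1.add ((hI.const_mul (2 * (k₀:ℂ))))
    have hψe := hψode x hxI
    have hφe := hφode x hxI
    have hzero : deriv (deriv φ) x * ψ x + deriv φ x * deriv ψ x
          - (deriv (deriv ψ) x * φ x + deriv ψ x * deriv φ x)
          + 2 * k₀ * (ψ x) ^ 2 = 0 := by
      have hψ2 : deriv (deriv ψ) x = U x * ψ x - (k₀:ℂ)^2 * ψ x := by linear_combination -hψe
      have hφ2 : deriv (deriv φ) x = U x * φ x - (k₀:ℂ)^2 * φ x - 2 * k₀ * ψ x := by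
        linear_combination -hφe
      rw [hψ2, hφ2]; ring
    rw [hzero] at h2
    exact h2.hasDerivWithinAt
  intro x hx
  have hconst := constant_of_has_deriv_right_zero hfc hderiv x hx
  have : f x = f (-1) := hconst
  rw [hf] at this
  simp only at this
  rw [this, intervalIntegral.integral_same, hψm, hψm', hφm, hφm']
  have hE : Complex.exp (Complex.I * k₀) * Complex.exp (Complex.I * k₀)
      = Complex.exp (2 * Complex.I * k₀) := by
    rw [← Complex.exp_add]; ring_nf
  linear_combination (-(Complex.I) * αm ^ 2) * hE
end

section
/- Under the hypotheses of the previous first-integral identity, if additionally φ satisfies the asymptotic matching at x = 1, namely φ(1) = (i α₊ + β₊) e^{ik₀} and φ'(1) = ik₀(i α₊ + β₊)e^{ik₀} + i α₊ e^{ik₀}, then necessarily ∫_{-1}^{1} ψ(x)² dx = (α₋² + α₊²) e^{2ik₀} / (2 i k₀). -/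
/-!
The Wronskian `W = φ ψ' - φ' ψ` of the outgoing solution `ψ` and the associated solution `φ`
satisfies `W' = φ ψ'' - φ'' ψ = 2 k₀ ψ²`, because the potential terms cancel and only the
inhomogeneity `2 k₀ ψ` of the equation for `φ` survives. Integrating over `[-1, 1]`,
`2 k₀ ∫ ψ² = W(1) - W(-1)`, and the prescribed boundary values give
`W(±1) = ∓ i α±² e^{2ik₀}`.
-/

open Set

noncomputable def wronskian (f g : ℝ → ℂ) (x : ℝ) : ℂ :=
  f x * deriv g x - deriv f x * g x

theorem hasDerivAt_wronskian {f g : ℝ → ℂ} (hf : ContDiff ℝ 2 f) (hg : ContDiff ℝ 2 g) (x : ℝ) :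
    HasDerivAt (wronskian f g) (f x * deriv (deriv g) x - deriv (deriv f) x * g x) x := by
  have hf' : Differentiable ℝ (deriv f) := (hf.iterate_deriv' 1 1).differentiable one_ne_zero
  have hg' : Differentiable ℝ (deriv g) := (hg.iterate_deriv' 1 1).differentiable one_ne_zero
  have hfd : Differentiable ℝ f := hf.differentiable two_ne_zero
  have hgd : Differentiable ℝ g := hg.differentiable two_ne_zero
  exact (((hfd x).hasDerivAt.mul (hg' x).hasDerivAt).sub
    ((hf' x).hasDerivAt.mul (hgd x).hasDerivAt)).congr_deriv (by ring)

theorem integral_mul_eq_wronskian_sub {a b : ℝ} (hab : a ≤ b) {V f ψ φ : ℝ → ℂ}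
    (hψ : ContDiff ℝ 2 ψ) (hφ : ContDiff ℝ 2 φ)
    (hψode : ∀ x ∈ Icc a b, deriv (deriv ψ) x = V x * ψ x)
    (hφode : ∀ x ∈ Icc a b, deriv (deriv φ) x = V x * φ x - f x) :
    ∫ x in a..b, f x * ψ x = wronskian φ ψ b - wronskian φ ψ a := by
  have hcont : Continuous fun x => φ x * deriv (deriv ψ) x - deriv (deriv φ) x * ψ x :=
    (hφ.continuous.mul (hψ.iterate_deriv' 0 2).continuous).sub
      ((hφ.iterate_deriv' 0 2).continuous.mul hψ.continuous)
  rw [← intervalIntegral.integral_eq_sub_of_hasDerivAt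
    (fun x _ => hasDerivAt_wronskian hφ hψ x) (hcont.intervalIntegrable a b)]
  refine intervalIntegral.integral_congr fun x hx => ?_
  rw [uIcc_of_le hab] at hx
  simp only [hψode x hx, hφode x hx]
  ring

theorem stmt_12_general (k₀ : ℝ) (hk : k₀ ≠ 0) (U : ℝ → ℂ)
    (αm αp βm βp : ℂ) (ψ φ : ℝ → ℂ)
    (hψ : ContDiff ℝ 2 ψ) (hφ : ContDiff ℝ 2 φ)
    (hψode : ∀ x ∈ Set.Icc (-1 : ℝ) 1,
      -(deriv (deriv ψ) x) + U x * ψ x = (k₀ : ℂ) ^ 2 * ψ x)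
    (hψm : ψ (-1) = αm * Complex.exp (Complex.I * k₀))
    (hψm' : deriv ψ (-1) = -(Complex.I * k₀) * αm * Complex.exp (Complex.I * k₀))
    (hψp : ψ 1 = αp * Complex.exp (Complex.I * k₀))
    (hψp' : deriv ψ 1 = Complex.I * k₀ * αp * Complex.exp (Complex.I * k₀))
    (hφode : ∀ x ∈ Set.Icc (-1 : ℝ) 1,
      -(deriv (deriv φ) x) + U x * φ x - (k₀ : ℂ) ^ 2 * φ x = 2 * k₀ * ψ x)
    (hφm : φ (-1) = (Complex.I * αm + βm) * Complex.exp (Complex.I * k₀))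
    (hφm' : deriv φ (-1) =
      -(Complex.I * k₀) * (Complex.I * αm + βm) * Complex.exp (Complex.I * k₀)
        - Complex.I * αm * Complex.exp (Complex.I * k₀))
    (hφp : φ 1 = (Complex.I * αp + βp) * Complex.exp (Complex.I * k₀))
    (hφp' : deriv φ 1 =
      Complex.I * k₀ * (Complex.I * αp + βp) * Complex.exp (Complex.I * k₀)
        + Complex.I * αp * Complex.exp (Complex.I * k₀)) :
    (∫ x in (-1 : ℝ)..1, (ψ x) ^ 2) =
      (αm ^ 2 + αp ^ 2) * Complex.exp (2 * Complex.I * k₀) / (2 * Complex.I * k₀) := by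
  have hgreen := integral_mul_eq_wronskian_sub (show (-1 : ℝ) ≤ 1 by norm_num) hψ hφ
    (V := fun x => U x - (k₀ : ℂ) ^ 2) (f := fun x => 2 * k₀ * ψ x)
    (fun x hx => by linear_combination -hψode x hx)
    (fun x hx => by linear_combination -hφode x hx)
  have hE : Complex.exp (2 * Complex.I * k₀) = Complex.exp (Complex.I * k₀) ^ 2 := by
    rw [← Complex.exp_nat_mul]; ring_nf
  have hboundary : wronskian φ ψ 1 - wronskian φ ψ (-1) =
      -Complex.I * (αm ^ 2 + αp ^ 2) * Complex.exp (2 * Complex.I * k₀) := by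
    simp only [wronskian, hψm, hψm', hψp, hψp', hφm, hφm', hφp, hφp', hE]
    ring
  have hk' : (k₀ : ℂ) ≠ 0 := Complex.ofReal_ne_zero.mpr hk
  have hintegral : ∫ x in (-1 : ℝ)..1, 2 * (k₀ : ℂ) * ψ x * ψ x =
      2 * k₀ * ∫ x in (-1 : ℝ)..1, ψ x ^ 2 := by
    simp only [mul_assoc, ← sq, intervalIntegral.integral_const_mul]
  rw [hintegral, hboundary] at hgreen
  rw [eq_div_iff (by simp [hk', Complex.I_ne_zero])]
  linear_combination Complex.I * hgreen
    - (αm ^ 2 + αp ^ 2) * Complex.exp (2 * Complex.I * k₀) * Complex.I_sq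

/-- Condition (30): matching the associated solution at x = 1 forces
∫ψ² = (α₋² + α₊²)e^{2ik₀}/(2ik₀). -/
theorem stmt_12 (k₀ : ℝ) (hk : k₀ ≠ 0) (U : ℝ → ℂ)
    (hU : ContinuousOn U (Set.Icc (-1 : ℝ) 1))
    (αm αp βm βp : ℂ) (ψ φ : ℝ → ℂ)
    (hψ : ContDiff ℝ 2 ψ) (hφ : ContDiff ℝ 2 φ)
    (hψode : ∀ x ∈ Set.Icc (-1 : ℝ) 1,
      -(deriv (deriv ψ) x) + U x * ψ x = (k₀ : ℂ) ^ 2 * ψ x)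
    (hψm : ψ (-1) = αm * Complex.exp (Complex.I * k₀))
    (hψm' : deriv ψ (-1) = -(Complex.I * k₀) * αm * Complex.exp (Complex.I * k₀))
    (hψp : ψ 1 = αp * Complex.exp (Complex.I * k₀))
    (hψp' : deriv ψ 1 = Complex.I * k₀ * αp * Complex.exp (Complex.I * k₀))
    (hφode : ∀ x ∈ Set.Icc (-1 : ℝ) 1,
      -(deriv (deriv φ) x) + U x * φ x - (k₀ : ℂ) ^ 2 * φ x = 2 * k₀ * ψ x)
    (hφm : φ (-1) = (Complex.I * αm + βm) * Complex.exp (Complex.I * k₀))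
    (hφm' : deriv φ (-1) =
      -(Complex.I * k₀) * (Complex.I * αm + βm) * Complex.exp (Complex.I * k₀)
        - Complex.I * αm * Complex.exp (Complex.I * k₀))
    (hφp : φ 1 = (Complex.I * αp + βp) * Complex.exp (Complex.I * k₀))
    (hφp' : deriv φ 1 =
      Complex.I * k₀ * (Complex.I * αp + βp) * Complex.exp (Complex.I * k₀)
        + Complex.I * αp * Complex.exp (Complex.I * k₀)) :
    (∫ x in (-1 : ℝ)..1, (ψ x) ^ 2) =
      (αm ^ 2 + αp ^ 2) * Complex.exp (2 * Complex.I * k₀) / (2 * Complex.I * k₀) :=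
  stmt_12_general k₀ hk U αm αp βm βp ψ φ hψ hφ hψode hψm hψm' hψp hψp' hφode hφm hφm' hφp hφp'
end

section
/- Let k₀ ∈ ℝ, k₀ ≠ 0, and let ψ be a C² nonvanishing function on [-1,1] satisfying -ψ'' + Uψ = k₀²ψ (with U := (ψ'' + k₀²ψ)/ψ), the boundary conditions ψ(±1) = 1, ψ'(±1) = ±i k₀, and the integral condition ∫_{-1}^{1} ψ(x)² dx = 1/(i k₀). Define φ(x) = ψ(x)·[ i + β - i e^{2ik₀} ∫_{-1}^{x} dζ/ψ(ζ)² - 2k₀ ∫_{-1}^{x} (1/ψ(ζ)²) (∫_{-1}^{ζ} ψ(ζ')² dζ') dζ ] for any constant β ∈ ℂ. Then φ satisfies -φ'' + U φ - k₀² φ = 2 k₀ ψ on (-1,1). -/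
/-!
Write `φ = ψ g`. The factor `g` is built so that `ψ² g' = -i e^{2ik₀} - 2k₀ ∫_{-1}^x ψ²`,
whose derivative is `-2k₀ ψ²`. Reduction of order turns this into
`φ'' = ψ'' g + (ψ² g')' / ψ = ψ'' g - 2k₀ ψ`, and since `U ψ = ψ'' + k₀² ψ` the terms in `g`
cancel in `-φ'' + U φ - k₀² φ`, leaving `2k₀ ψ`.
-/

open Set Filter Topology

theorem hasDerivAt_integral_of_continuousOn_Icc {E : Type*} [NormedAddCommGroup E]
    [NormedSpace ℝ E] [CompleteSpace E] {f : ℝ → E} {a b t : ℝ}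
    (hf : ContinuousOn f (Icc a b)) (ht : t ∈ Ioo a b) :
    HasDerivAt (fun u => ∫ s in a..u, f s) (f t) t := by
  have hfo : ContinuousOn f (Ioo a b) := hf.mono Ioo_subset_Icc_self
  refine intervalIntegral.integral_hasDerivAt_right (hf.mono ?_).intervalIntegrable
    (hfo.stronglyMeasurableAtFilter isOpen_Ioo t ht) (hfo.continuousAt (isOpen_Ioo.mem_nhds ht))
  rw [uIcc_of_le ht.1.le]
  exact Icc_subset_Icc_right ht.2.le

theorem deriv_deriv_eq_of_sq_mul_deriv {ψ g N φ : ℝ → ℂ} {x : ℝ} {N' : ℂ}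
    (hφ : φ =ᶠ[𝓝 x] fun t => ψ t * g t)
    (hψ : ∀ᶠ t in 𝓝 x, DifferentiableAt ℝ ψ t) (hψ' : DifferentiableAt ℝ (deriv ψ) x)
    (hψx : ψ x ≠ 0) (hg : ∀ᶠ t in 𝓝 x, HasDerivAt g (N t / ψ t ^ 2) t)
    (hN : HasDerivAt N N' x) :
    deriv (deriv φ) x = deriv (deriv ψ) x * g x + N' / ψ x := by
  have hφ' : deriv φ =ᶠ[𝓝 x] fun t => deriv ψ t * g t + N t / ψ t := by
    filter_upwards [eventually_eventuallyEq_nhds.2 hφ, hψ, hg] with t hφt hψt hgt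
    rw [hφt.deriv_eq]
    refine (hψt.hasDerivAt.mul hgt).deriv.trans ?_
    rcases eq_or_ne (ψ t) 0 with h | h
    · simp [h]
    · field_simp
  rw [hφ'.deriv_eq]
  refine ((hψ'.hasDerivAt.mul hg.self_of_nhds).add
    (hN.div hψ.self_of_nhds.hasDerivAt hψx)).deriv.trans ?_
  field_simp
  ring

theorem hasDerivAt_sub_integral_inv_sq {ψ : ℝ → ℂ} (hψ : Continuous ψ) {a b t : ℝ}
    (hψ0 : ∀ x ∈ Icc a b, ψ x ≠ 0) (A c k : ℂ) (ht : t ∈ Ioo a b) :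
    HasDerivAt (fun x => A - c * (∫ ζ in a..x, 1 / ψ ζ ^ 2)
        - k * ∫ ζ in a..x, 1 / ψ ζ ^ 2 * ∫ ζ' in a..ζ, ψ ζ' ^ 2)
      ((-c - k * ∫ ζ in a..t, ψ ζ ^ 2) / ψ t ^ 2) t := by
  have hinv : ContinuousOn (fun ζ => 1 / ψ ζ ^ 2) (Icc a b) :=
    continuousOn_const.div (hψ.pow 2).continuousOn fun ζ hζ => pow_ne_zero 2 (hψ0 ζ hζ)
  have hF : Continuous fun ζ => ∫ ζ' in a..ζ, ψ ζ' ^ 2 :=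
    intervalIntegral.continuous_primitive (fun _ _ => (hψ.pow 2).intervalIntegrable _ _) a
  refine (((hasDerivAt_integral_of_continuousOn_Icc hinv ht).const_mul c).const_sub A |>.sub
    ((hasDerivAt_integral_of_continuousOn_Icc (hinv.mul hF.continuousOn) ht).const_mul k))
    |>.congr_deriv ?_
  simp only [Pi.mul_apply]
  ring

theorem stmt_13_general (k₀ : ℝ) (ψ : ℝ → ℂ)
    (hψ : ContDiff ℝ 2 ψ)
    (hψ0 : ∀ x ∈ Set.Icc (-1 : ℝ) 1, ψ x ≠ 0)
    (U : ℝ → ℂ)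
    (hU : ∀ x ∈ Set.Icc (-1 : ℝ) 1,
      U x = (deriv (deriv ψ) x + (k₀ : ℂ) ^ 2 * ψ x) / ψ x)
    (β : ℂ) (φ : ℝ → ℂ)
    (hφdef : ∀ x ∈ Set.Icc (-1 : ℝ) 1,
      φ x = ψ x * (Complex.I + β
        - Complex.I * Complex.exp (2 * Complex.I * k₀) *
            (∫ ζ in (-1 : ℝ)..x, 1 / (ψ ζ) ^ 2)
        - 2 * k₀ * (∫ ζ in (-1 : ℝ)..x,
            (1 / (ψ ζ) ^ 2) * (∫ ζ' in (-1 : ℝ)..ζ, (ψ ζ') ^ 2)))) :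
    ∀ x ∈ Set.Ioo (-1 : ℝ) 1,
      -(deriv (deriv φ) x) + U x * φ x - (k₀ : ℂ) ^ 2 * φ x = 2 * k₀ * ψ x := by
  intro x hx
  have hxI : x ∈ Icc (-1 : ℝ) 1 := Ioo_subset_Icc_self hx
  have hIoo : Ioo (-1 : ℝ) 1 ∈ 𝓝 x := isOpen_Ioo.mem_nhds hx
  have hφ := mem_of_superset hIoo fun t ht => hφdef t (Ioo_subset_Icc_self ht)
  have hg := mem_of_superset hIoo fun t ht =>
    hasDerivAt_sub_integral_inv_sq hψ.continuous hψ0 (Complex.I + β)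
      (Complex.I * Complex.exp (2 * Complex.I * k₀)) (2 * k₀) ht
  have hN := ((Continuous.integral_hasStrictDerivAt (f := fun t => ψ t ^ 2)
    (hψ.continuous.pow 2) (-1) x).hasDerivAt.const_mul
    (2 * (k₀ : ℂ))).const_sub (-(Complex.I * Complex.exp (2 * Complex.I * k₀)))
  rw [deriv_deriv_eq_of_sq_mul_deriv hφ (Eventually.of_forall (hψ.differentiable two_ne_zero))
      (hψ.differentiable_deriv_two x) (hψ0 x hxI) hg hN, hU x hxI, hφdef x hxI]
  field_simp [hψ0 x hxI]
  ring

/-- Explicit construction of the associated (Jordan-chain) function φ for a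
second-order spectral singularity. -/
theorem stmt_13 (k₀ : ℝ) (hk : k₀ ≠ 0) (ψ : ℝ → ℂ)
    (hψ : ContDiff ℝ 2 ψ)
    (hψ0 : ∀ x ∈ Set.Icc (-1 : ℝ) 1, ψ x ≠ 0)
    (U : ℝ → ℂ)
    (hU : ∀ x ∈ Set.Icc (-1 : ℝ) 1,
      U x = (deriv (deriv ψ) x + (k₀ : ℂ) ^ 2 * ψ x) / ψ x)
    (hbp : ψ 1 = 1) (hbm : ψ (-1) = 1)
    (hbp' : deriv ψ 1 = Complex.I * k₀) (hbm' : deriv ψ (-1) = -(Complex.I * k₀))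
    (hint : (∫ x in (-1 : ℝ)..1, (ψ x) ^ 2) = 1 / (Complex.I * k₀))
    (β : ℂ) (φ : ℝ → ℂ)
    (hφdef : ∀ x ∈ Set.Icc (-1 : ℝ) 1,
      φ x = ψ x * (Complex.I + β
        - Complex.I * Complex.exp (2 * Complex.I * k₀) *
            (∫ ζ in (-1 : ℝ)..x, 1 / (ψ ζ) ^ 2)
        - 2 * k₀ * (∫ ζ in (-1 : ℝ)..x,
            (1 / (ψ ζ) ^ 2) * (∫ ζ' in (-1 : ℝ)..ζ, (ψ ζ') ^ 2)))) :
    ∀ x ∈ Set.Ioo (-1 : ℝ) 1,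
      -(deriv (deriv φ) x) + U x * φ x - (k₀ : ℂ) ^ 2 * φ x = 2 * k₀ * ψ x :=
  stmt_13_general k₀ ψ hψ hψ0 U hU β φ hφdef
end

section
/- Let k₀ ∈ ℝ, k₀ ≠ 0, and suppose 1 + 2ik₀ - e^{2ik₀} ≠ 0. Define F(k; z₁, z₂) = (z₁/(4k²))(e^{-2ik} - 1) + (i/(2k)) z₂ + 1. Then the unique pair (z₁, z₂) ∈ ℂ² solving the linear system F(k₀; z₁, z₂) = 0 and (∂F/∂k)(k₀; z₁, z₂) = 0 is z₁ = 4k₀² e^{2ik₀}/(1 + 2ik₀ - e^{2ik₀}) and z₂ = 4ik₀(1 + ik₀ - e^{2ik₀})/(1 + 2ik₀ - e^{2ik₀}). -/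
/-! Multiplying `F` by `4k²E` and `∂F/∂k` by `-2k³E`, where `E = e^{2ik}`, turns the two
conditions into a linear system in `(z₁, z₂)` with coefficients polynomial in `k` and `E`.
Its determinant is `-ikE(1 + 2ik - E)`, which is nonzero under the hypotheses, and
eliminating `z₂` gives `z₁(1 + 2ik - E) = 4k²E` directly. -/

open Complex

noncomputable section

namespace TwoDelta

def m22 (k z₁ z₂ : ℂ) : ℂ :=
  z₁ / (4 * k ^ 2) * (exp (-(2 * I * k)) - 1) + I / (2 * k) * z₂ + 1

theorem hasDerivAt_m22 (z₁ z₂ : ℂ) {k : ℂ} (hk : k ≠ 0) :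
    HasDerivAt (fun k => m22 k z₁ z₂)
      (-(z₁ * (I * k * exp (-(2 * I * k)) + exp (-(2 * I * k)) - 1)) / (2 * k ^ 3)
        - I * z₂ / (2 * k ^ 2)) k := by
  have hexp :
      HasDerivAt (fun k : ℂ => exp (-(2 * I * k))) (exp (-(2 * I * k)) * -(2 * I)) k := by
    simpa using (((hasDerivAt_id k).const_mul (2 * I)).neg).cexp
  have hsq : HasDerivAt (fun k : ℂ => 4 * k ^ 2) (4 * (2 * k)) k := by
    simpa using (hasDerivAt_pow 2 k).const_mul (4 : ℂ)
  have hlin : HasDerivAt (fun k : ℂ => 2 * k) 2 k := by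
    simpa using (hasDerivAt_id k).const_mul (2 : ℂ)
  have h := ((((hasDerivAt_const k z₁).fun_div hsq (by simp [hk])).fun_mul
    (hexp.sub_const 1)).fun_add
      (((hasDerivAt_const k I).fun_div hlin (by simp [hk])).mul_const z₂)).add_const 1
  refine h.congr_deriv ?_
  field_simp
  ring

theorem m22_eq_zero_iff (z₁ z₂ : ℂ) {k : ℂ} (hk : k ≠ 0) :
    m22 k z₁ z₂ = 0 ↔
      z₁ * (1 - exp (2 * I * k)) + 2 * I * k * exp (2 * I * k) * z₂
        + 4 * k ^ 2 * exp (2 * I * k) = 0 := by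
  have hcleared : 4 * k ^ 2 * exp (2 * I * k) * m22 k z₁ z₂ =
      z₁ * (1 - exp (2 * I * k)) + 2 * I * k * exp (2 * I * k) * z₂
        + 4 * k ^ 2 * exp (2 * I * k) := by
    rw [m22, exp_neg]
    field_simp
    ring
  rw [← hcleared, mul_eq_zero, or_iff_right (by simp [hk, exp_ne_zero])]

theorem deriv_m22_eq_zero_iff (z₁ z₂ : ℂ) {k : ℂ} (hk : k ≠ 0) :
    deriv (fun k => m22 k z₁ z₂) k = 0 ↔
      z₁ * (1 + I * k - exp (2 * I * k)) + I * k * exp (2 * I * k) * z₂ = 0 := by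
  have hcleared : -2 * k ^ 3 * exp (2 * I * k) * deriv (fun k => m22 k z₁ z₂) k =
      z₁ * (1 + I * k - exp (2 * I * k)) + I * k * exp (2 * I * k) * z₂ := by
    rw [(hasDerivAt_m22 z₁ z₂ hk).deriv, exp_neg]
    field_simp
    ring
  rw [← hcleared, mul_eq_zero, or_iff_right (by simp [hk, exp_ne_zero])]

theorem cleared_system_iff {k E z₁ z₂ : ℂ} (hk : k ≠ 0) (hE : E ≠ 0)
    (hD : 1 + 2 * I * k - E ≠ 0) :
    (z₁ * (1 - E) + 2 * I * k * E * z₂ + 4 * k ^ 2 * E = 0 ∧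
        z₁ * (1 + I * k - E) + I * k * E * z₂ = 0) ↔
      (z₁ = 4 * k ^ 2 * E / (1 + 2 * I * k - E) ∧
        z₂ = 4 * I * k * (1 + I * k - E) / (1 + 2 * I * k - E)) := by
  have hkE : I * k * E ≠ 0 := by simp [hk, hE]
  rw [eq_div_iff hD, eq_div_iff hD]
  constructor
  · rintro ⟨h₁, h₂⟩
    have hz₁ : z₁ * (1 + 2 * I * k - E) = 4 * k ^ 2 * E := by linear_combination 2 * h₂ - h₁
    refine ⟨hz₁, mul_left_cancel₀ hkE ?_⟩
    linear_combination (1 + 2 * I * k - E) * h₂ - (1 + I * k - E) * hz₁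
      - 4 * k ^ 2 * E * (1 + I * k - E) * I_sq
  · rintro ⟨hz₁, hz₂⟩
    have h₂ : z₁ * (1 + I * k - E) + I * k * E * z₂ = 0 := by
      refine mul_left_cancel₀ hD ?_
      linear_combination (1 + I * k - E) * hz₁ + I * k * E * hz₂
        + 4 * k ^ 2 * E * (1 + I * k - E) * I_sq
    exact ⟨by linear_combination 2 * h₂ - hz₁, h₂⟩

end TwoDelta

/-- The unique parameters (z₁, z₂) giving a second-order spectral singularity of the
two-delta potential at a prescribed real k₀. -/
theorem stmt_17 (k₀ : ℝ) (hk : k₀ ≠ 0)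
    (hden : 1 + 2 * Complex.I * k₀ - Complex.exp (2 * Complex.I * k₀) ≠ 0)
    (F : ℂ → ℂ → ℂ → ℂ)
    (hF : ∀ k z₁ z₂, F k z₁ z₂ =
      z₁ / (4 * k ^ 2) * (Complex.exp (-(2 * Complex.I * k)) - 1)
        + Complex.I / (2 * k) * z₂ + 1) :
    ∀ z₁ z₂ : ℂ,
      (F (k₀ : ℂ) z₁ z₂ = 0 ∧ deriv (fun k => F k z₁ z₂) (k₀ : ℂ) = 0) ↔
      (z₁ = 4 * (k₀ : ℂ) ^ 2 * Complex.exp (2 * Complex.I * k₀) /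
          (1 + 2 * Complex.I * k₀ - Complex.exp (2 * Complex.I * k₀)) ∧
       z₂ = 4 * Complex.I * k₀ * (1 + Complex.I * k₀ - Complex.exp (2 * Complex.I * k₀)) /
          (1 + 2 * Complex.I * k₀ - Complex.exp (2 * Complex.I * k₀))) := by
  intro z₁ z₂
  obtain rfl : F = TwoDelta.m22 := funext₃ hF
  have hk' : (k₀ : ℂ) ≠ 0 := Complex.ofReal_ne_zero.mpr hk
  rw [TwoDelta.m22_eq_zero_iff z₁ z₂ hk', TwoDelta.deriv_m22_eq_zero_iff z₁ z₂ hk']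
  exact TwoDelta.cleared_system_iff hk' (Complex.exp_ne_zero _) hden
end
end
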